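/- arXiv:1909.12044 — 5 statements merged into one kernel-verified Lean document; each statement's English description precedes it below -/
import Mathlib

section
/- Let A and B be finite sets. Then every permutation of A × B can be written as a composition π₁ ∘ σ ∘ π₂, where π₁ and π₂ are permutations preserving the second coordinate (i.e., for all (a,b), π(a,b) ∈ A × {b}) and σ is a permutation preserving the first coordinate (i.e., for all (a,b), σ(a,b) ∈ {a} × B). -/
open Finset

universe u v

/-- Key combinatorial lemma (Birkhoff-style decomposition): if `F : A × B → B` has all
fibers of size `card A`, then we can permute each row so that each column becomes a
bijection onto `B`. -/
lemma key_lemma (n : ℕ) :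
    ∀ (A : Type u) (B : Type v) [Fintype A] [Fintype B] [DecidableEq A] [DecidableEq B],
      Fintype.card A = n →
      ∀ F : A × B → B,
        (∀ b' : B, (Finset.univ.filter fun p : A × B => F p = b').card = Fintype.card A) →
        ∃ (g : B → Equiv.Perm A) (h : A → Equiv.Perm B), ∀ a b, F (g b a, b) = h a b := by
  induction n with
  | zero =>
    intro A B _ _ _ _ hcard F _
    have : IsEmpty A := Fintype.card_eq_zero_iff.mp hcard
    exact ⟨fun _ => 1, fun a => isEmptyElim a, fun a => isEmptyElim a⟩
  | succ n IH =>
    intro A B _ _ _ _ hcard F hF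
    have hA : Nonempty A := Fintype.card_pos_iff.mp (by omega)
    obtain ⟨a₀⟩ := hA
    -- Hall's condition for the bipartite graph rows → targets
    set t : B → Finset B := fun b => Finset.univ.image (fun a => F (a, b)) with ht
    have hall : ∀ s : Finset B, s.card ≤ (s.biUnion t).card := by
      intro s
      have hsub : (Finset.univ ×ˢ s : Finset (A × B)) ⊆
          (s.biUnion t).biUnion (fun b' => Finset.univ.filter fun p : A × B => F p = b') := by
        intro p hp
        simp only [Finset.mem_product, Finset.mem_univ, true_and] at hp
        refine Finset.mem_biUnion.mpr ⟨F p, ?_, ?_⟩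
        · exact Finset.mem_biUnion.mpr ⟨p.2, hp, by simp [ht]⟩
        · simp
      have h1 : (Finset.univ ×ˢ s : Finset (A × B)).card = Fintype.card A * s.card := by
        simp [Finset.card_product]
      have h2 : ((s.biUnion t).biUnion
            (fun b' => Finset.univ.filter fun p : A × B => F p = b')).card
          ≤ (s.biUnion t).card * Fintype.card A := by
        calc _ ≤ ∑ b' ∈ s.biUnion t,
              (Finset.univ.filter fun p : A × B => F p = b').card := Finset.card_biUnion_le
        _ = (s.biUnion t).card * Fintype.card A := by
            rw [Finset.sum_congr rfl (fun b' _ => hF b'), Finset.sum_const, smul_eq_mul]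
      have := (Finset.card_le_card hsub).trans h2
      rw [h1] at this
      have hpos : 0 < Fintype.card A := by omega
      nlinarith [Nat.mul_le_mul_left 1 this]
    obtain ⟨f, hfinj, hft⟩ := (Finset.all_card_le_biUnion_card_iff_exists_injective t).mp hall
    -- f b ∈ t b means ∃ a, F (a,b) = f b; choose it
    have hsel : ∀ b, ∃ a, F (a, b) = f b := by
      intro b
      have := hft b
      simp only [ht, Finset.mem_image, Finset.mem_univ, true_and] at this
      exact this
    choose t' ht' using hsel
    have hfbij : Function.Bijective f := Finite.injective_iff_bijective.mp hfinj
    let m : Equiv.Perm B := Equiv.ofBijective f hfbij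
    have hm : ∀ b, m b = f b := fun b => rfl
    -- move selected elements to column a₀
    set F1 : A × B → B := fun p => F (Equiv.swap a₀ (t' p.2) p.1, p.2) with hF1
    have hF1card : ∀ b' : B,
        (Finset.univ.filter fun p : A × B => F1 p = b').card = Fintype.card A := by
      intro b'
      rw [← hF b']
      apply Finset.card_bij' (fun p _ => (Equiv.swap a₀ (t' p.2) p.1, p.2))
        (fun p _ => (Equiv.swap a₀ (t' p.2) p.1, p.2))
      · intro p hp
        simp only [Finset.mem_filter, Finset.mem_univ, true_and] at hp ⊢
        exact hp
      · intro p hp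
        simp only [Finset.mem_filter, Finset.mem_univ, true_and, hF1] at hp ⊢
        simpa using hp
      · intro p _; simp
      · intro p _; simp
    -- the a₀-column of F1 realizes the matching m
    have hF1a₀ : ∀ b, F1 (a₀, b) = m b := by
      intro b
      simp only [hF1, Equiv.swap_apply_left]
      rw [ht' b, hm]
    -- restrict to A' = A \ {a₀}
    set A' := {a : A // a ≠ a₀} with hA'
    set F' : A' × B → B := fun p => F1 (p.1.1, p.2) with hF'
    have hcardA' : Fintype.card A' = n := by
      have : Fintype.card A' = Fintype.card A - 1 := by
        simp [hA', Fintype.card_subtype_compl]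
      omega
    have hF'card : ∀ b' : B,
        (Finset.univ.filter fun p : A' × B => F' p = b').card = Fintype.card A' := by
      intro b'
      have hsplit : (Finset.univ.filter fun p : A × B => F1 p = b').card =
          (Finset.univ.filter fun p : A × B => F1 p = b' ∧ p.1 = a₀).card +
          (Finset.univ.filter fun p : A × B => F1 p = b' ∧ p.1 ≠ a₀).card := by
        rw [← Finset.filter_filter, ← Finset.filter_filter,
          Finset.card_filter_add_card_filter_not]
      have hone : (Finset.univ.filter fun p : A × B => F1 p = b' ∧ p.1 = a₀).card = 1 := by
        have : (Finset.univ.filter fun p : A × B => F1 p = b' ∧ p.1 = a₀) =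
            {(a₀, m.symm b')} := by
          ext p
          simp only [Finset.mem_filter, Finset.mem_univ, true_and, Finset.mem_singleton]
          constructor
          · rintro ⟨h1, h2⟩
            obtain ⟨a, b⟩ := p
            simp only at h2
            subst h2
            rw [hF1a₀] at h1
            rw [← h1]
            simp
          · rintro rfl
            refine ⟨?_, rfl⟩
            rw [hF1a₀]
            simp
        rw [this, Finset.card_singleton]
      have hbij : (Finset.univ.filter fun p : A' × B => F' p = b').card =
          (Finset.univ.filter fun p : A × B => F1 p = b' ∧ p.1 ≠ a₀).card := by
        apply Finset.card_bij (fun p _ => (p.1.1, p.2))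
        · intro p hp
          simp only [Finset.mem_filter, Finset.mem_univ, true_and] at hp ⊢
          exact ⟨hp, p.1.2⟩
        · rintro ⟨⟨a1, ha1⟩, b1⟩ h1 ⟨⟨a2, ha2⟩, b2⟩ h2 heq
          simp only [Prod.mk.injEq] at heq
          simp [heq.1, heq.2]
        · intro p hp
          simp only [Finset.mem_filter, Finset.mem_univ, true_and] at hp
          exact ⟨(⟨p.1, hp.2⟩, p.2), by simp [hF', hp.1], rfl⟩
      rw [hbij, hcardA']
      have := hF1card b'
      rw [hsplit, hone] at this
      omega
    obtain ⟨g', h', hgh'⟩ := IH A' B hcardA' F' hF'card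
    -- assemble
    refine ⟨fun b => Equiv.swap a₀ (t' b) * (Equiv.Perm.ofSubtype (g' b)),
      fun a => if ha : a = a₀ then m else h' ⟨a, ha⟩, ?_⟩
    intro a b
    by_cases ha : a = a₀
    · subst ha
      simp only [dif_pos]
      have h1 : Equiv.Perm.ofSubtype (g' b) a = a := by
        apply Equiv.Perm.ofSubtype_apply_of_not_mem
        simp
      simp only [Equiv.Perm.mul_apply, h1, Equiv.swap_apply_left]
      rw [ht' b, hm]
    · simp only [dif_neg ha]
      have h1 : Equiv.Perm.ofSubtype (g' b) a = (g' b ⟨a, ha⟩ : A) :=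
        Equiv.Perm.ofSubtype_apply_of_mem (g' b) ha
      simp only [Equiv.Perm.mul_apply, h1]
      have := hgh' ⟨a, ha⟩ b
      simpa [hF', hF1] using this

/-- For finite sets `A`, `B`, every permutation of `A × B` can be written
as `π₁ * σ * π₂` where `π₁, π₂` preserve the second coordinate and `σ` preserves the first. -/
theorem sym_prod_decomposition (A B : Type*) [Finite A] [Finite B]
    (π : Equiv.Perm (A × B)) :
    ∃ π₁ σ π₂ : Equiv.Perm (A × B),
      (∀ p : A × B, (π₁ p).2 = p.2) ∧
      (∀ p : A × B, (σ p).1 = p.1) ∧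
      (∀ p : A × B, (π₂ p).2 = p.2) ∧
      π = π₁ * σ * π₂ := by
  classical
  have : Fintype A := Fintype.ofFinite A
  have : Fintype B := Fintype.ofFinite B
  set F : A × B → B := fun p => (π p).2 with hFdef
  have hF : ∀ b' : B, (Finset.univ.filter fun p : A × B => F p = b').card = Fintype.card A := by
    intro b'
    have h1 : (Finset.univ.filter fun p : A × B => F p = b').card =
        (Finset.univ.filter fun p : A × B => p.2 = b').card := by
      apply Finset.card_bij (fun p _ => π p)
      · intro p hp
        simp only [Finset.mem_filter, Finset.mem_univ, true_and] at hp ⊢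
        exact hp
      · intro p _ q _ h
        exact π.injective h
      · intro p hp
        simp only [Finset.mem_filter, Finset.mem_univ, true_and] at hp
        exact ⟨π.symm p, by simp [hFdef, hp], by simp⟩
    rw [h1]
    have : (Finset.univ.filter fun p : A × B => p.2 = b') = Finset.univ ×ˢ {b'} := by
      ext p
      simp only [Finset.mem_filter, Finset.mem_univ, true_and, Finset.mem_product,
        Finset.mem_singleton]
    rw [this]
    simp
  obtain ⟨g, h, hgh⟩ := key_lemma (Fintype.card A) A B rfl F hF
  -- row permutation G : (a,b) ↦ (g b a, b)
  let G : Equiv.Perm (A × B) :=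
    ⟨fun p => (g p.2 p.1, p.2), fun p => ((g p.2).symm p.1, p.2),
      fun p => by simp, fun p => by simp⟩
  -- column permutation σ : (a,b) ↦ (a, h a b)
  let S : Equiv.Perm (A × B) :=
    ⟨fun p => (p.1, h p.1 p.2), fun p => (p.1, (h p.1).symm p.2),
      fun p => by simp, fun p => by simp⟩
  refine ⟨π * G * S⁻¹, S, G⁻¹, ?_, ?_, ?_, ?_⟩
  · intro p
    obtain ⟨a, b⟩ := p
    have hS : S⁻¹ (a, b) = (a, (h a).symm b) := rfl
    have hG : G (a, (h a).symm b) = (g ((h a).symm b) a, (h a).symm b) := rfl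
    simp only [Equiv.Perm.mul_apply, hS, hG]
    have : (π (g ((h a).symm b) a, (h a).symm b)).2 = h a ((h a).symm b) :=
      hgh a ((h a).symm b)
    rw [this]
    simp
  · intro p; rfl
  · intro p
    obtain ⟨a, b⟩ := p
    rfl
  · group
end

section
/- Let d ≥ 2 and let A₁,…,A_d be finite sets. Then the symmetric group on A₁ × ⋯ × A_d equals the product G₁G₂⋯G_{d-1}G_dG_{d-1}⋯G₁, where G_i is the subgroup of permutations that change only the i-th coordinate (i.e., π(a₁,…,a_d) agrees with (a₁,…,a_d) in every coordinate except possibly the i-th). -/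
/-!
Write `∀ i, A i` as `A 0 × Y`. A permutation of `A 0 × Y` factors as `σ τ ρ` with `σ, ρ` fixing
the `Y`-component and `τ` fixing the `A 0`-component. Then `τ` is a family of permutations of `Y`
indexed by `A 0`; by induction on `d` each of them factors, all with the same shape, so the
factorizations can be carried out simultaneously.

The factorization `σ τ ρ` of `π : Perm (α × β)` is König's edge-colouring theorem: the bipartite
multigraph with an edge `x.2 — (π x).2` for every `x` is `|α|`-regular, so by Hall's theorem its
edges can be coloured by `α` with each colour class a perfect matching. If `c x` is the colour of
`x`, put `ρ x = (c x, x.2)` and `σ⁻¹ (π x) = (c x, (π x).2)`.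
-/

open Finset Function Equiv

namespace Finset

variable {X B : Type*} [Fintype B]

theorem exists_common_transversal_of_card_fiber_eq [DecidableEq B] (p q : X → B) (s : Finset X)
    {n : ℕ} (hn : 0 < n) (hp : ∀ b, #{x ∈ s | p x = b} = n)
    (hq : ∀ b, #{x ∈ s | q x = b} = n) :
    ∃ g : B → X, (∀ b, g b ∈ s) ∧ (∀ b, p (g b) = b) ∧ Bijective (q ∘ g) := by
  let t : B → Finset B := fun b => {x ∈ s | p x = b}.image q
  have hall : ∀ u : Finset B, #u ≤ #(u.biUnion t) := by
    intro u
    have hsub : {x ∈ s | p x ∈ u} ⊆ {x ∈ s | q x ∈ u.biUnion t} := by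
      intro x hx
      rw [mem_filter] at hx ⊢
      exact ⟨hx.1, mem_biUnion.2 ⟨p x, hx.2, mem_image_of_mem q (by simp [hx.1])⟩⟩
    have hcard := card_le_card hsub
    simp only [← sum_card_fiberwise_eq_card_filter, hp, hq, sum_const, smul_eq_mul] at hcard
    exact le_of_mul_le_mul_right hcard hn
  obtain ⟨F, hF, hFt⟩ := (all_card_le_biUnion_card_iff_exists_injective t).1 hall
  have hpre : ∀ b, ∃ x, (x ∈ s ∧ p x = b) ∧ q x = F b := fun b => by simpa [t] using hFt b
  choose g hg hgF using hpre
  refine ⟨g, fun b => (hg b).1, fun b => (hg b).2, ?_⟩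
  rw [show q ∘ g = F from funext hgF]
  exact Finite.injective_iff_bijective.1 hF

variable [DecidableEq X]

theorem card_filter_sdiff_image [DecidableEq B] (f : X → B) {g : B → X}
    (hfg : Bijective (f ∘ g)) {s : Finset X} (hgs : ∀ b, g b ∈ s) (b : B) :
    #{x ∈ s \ univ.image g | f x = b} = #{x ∈ s | f x = b} - 1 := by
  obtain ⟨b₀, hb₀⟩ := hfg.2 b
  have herase : {x ∈ s \ univ.image g | f x = b} = {x ∈ s | f x = b}.erase (g b₀) := by
    ext x
    simp only [mem_filter, mem_sdiff, mem_image, mem_univ, true_and, mem_erase]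
    constructor
    · rintro ⟨⟨hx, hxg⟩, rfl⟩
      exact ⟨fun h => hxg ⟨b₀, h.symm⟩, hx, rfl⟩
    · rintro ⟨hne, hx, rfl⟩
      refine ⟨⟨hx, ?_⟩, rfl⟩
      rintro ⟨b', rfl⟩
      exact hne (congrArg g (hfg.1 hb₀.symm))
  rw [herase, card_erase_of_mem (by simpa [hgs] using hb₀)]

theorem injOn_ite_mem_image (f : X → B) {g : B → X} (hfg : Injective (f ∘ g)) {s : Finset X}
    {n : ℕ} {c : X → ℕ} (hc : ∀ x ∈ s \ univ.image g, c x < n)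
    (hcf : Set.InjOn (fun x => (c x, f x)) ↑(s \ univ.image g)) :
    Set.InjOn (fun x => (if x ∈ univ.image g then n else c x, f x)) s := by
  intro x hx y hy hxy
  obtain ⟨hcxy, hfxy⟩ := Prod.mk.inj hxy
  by_cases hxg : x ∈ univ.image g <;> by_cases hyg : y ∈ univ.image g <;>
    simp only [hxg, hyg, if_true, if_false] at hcxy
  · obtain ⟨b, -, rfl⟩ := mem_image.1 hxg
    obtain ⟨b', -, rfl⟩ := mem_image.1 hyg
    rw [hfg hfxy]
  · exact absurd hcxy (hc y (mem_sdiff.2 ⟨hy, hyg⟩)).ne'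
  · exact absurd hcxy (hc x (mem_sdiff.2 ⟨hx, hxg⟩)).ne
  · exact hcf (mem_coe.2 (mem_sdiff.2 ⟨hx, hxg⟩)) (mem_coe.2 (mem_sdiff.2 ⟨hy, hyg⟩))
      (Prod.ext hcxy hfxy)

-- Colours are natural numbers below `n` rather than elements of `Fin n`: for `n = 0`, `s` is empty
-- but `X` need not be.
theorem exists_colouring_injOn_of_card_fiber_eq [DecidableEq B] (p q : X → B) (n : ℕ)
    (s : Finset X) (hp : ∀ b, #{x ∈ s | p x = b} = n) (hq : ∀ b, #{x ∈ s | q x = b} = n) :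
    ∃ c : X → ℕ, (∀ x ∈ s, c x < n) ∧
      Set.InjOn (fun x => (c x, p x)) s ∧ Set.InjOn (fun x => (c x, q x)) s := by
  induction n generalizing s with
  | zero =>
    have hs : s = ∅ := by
      rw [← card_eq_zero, card_eq_sum_card_fiberwise (fun x _ => mem_univ (p x))]
      simp [hp]
    subst hs
    exact ⟨fun _ => 0, by simp, by simp, by simp⟩
  | succ n ih =>
    obtain ⟨g, hgs, hgp, hgq⟩ :=
      exists_common_transversal_of_card_fiber_eq p q s n.succ_pos hp hq
    have hgp : Bijective (p ∘ g) := (funext hgp : p ∘ g = id) ▸ bijective_id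
    obtain ⟨c, hc, hcp, hcq⟩ := ih (s \ univ.image g)
      (fun b => by rw [card_filter_sdiff_image p hgp hgs, hp]; rfl)
      (fun b => by rw [card_filter_sdiff_image q hgq hgs, hq]; rfl)
    refine ⟨fun x => if x ∈ univ.image g then n else c x, fun x hx => ?_,
      injOn_ite_mem_image p hgp.1 hc hcp, injOn_ite_mem_image q hgq.1 hc hcq⟩
    dsimp only
    split_ifs with hxg
    · exact n.lt_succ_self
    · exact (hc x (mem_sdiff.2 ⟨hx, hxg⟩)).trans n.lt_succ_self

end Finset

theorem List.prod_ofFn_cons_snoc {M : Type*} [Monoid M] {n : ℕ} (a : M) (f : Fin n → M)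
    (b : M) : (List.ofFn (Fin.cons a (Fin.snoc f b) : Fin (n + 1 + 1) → M)).prod =
      a * (List.ofFn f).prod * b := by
  rw [List.ofFn_cons, List.ofFn_succ_last]
  simp [mul_assoc]

namespace Equiv.Perm

variable {α β : Type*}

def prodCongrRightHom : (α → Perm β) →* Perm (α × β) where
  toFun := prodCongrRight
  map_one' := rfl
  map_mul' _ _ := rfl

theorem prodCongrRight_ofFn_prod {n : ℕ} (f : α → Fin n → Perm β) :
    prodCongrRight (fun a => (List.ofFn (f a)).prod) =
      (List.ofFn fun j => prodCongrRight fun a => f a j).prod := by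
  have hpi : (fun a => (List.ofFn (f a)).prod) = (List.ofFn fun j a => f a j).prod := by
    funext a
    rw [Pi.list_prod_apply, List.map_ofFn]
    rfl
  rw [hpi]
  exact (map_list_prod prodCongrRightHom _).trans (congrArg List.prod List.map_ofFn)

theorem exists_prodCongrRight_eq (τ : Perm (α × β)) (hτ : ∀ x, (τ x).1 = x.1) :
    ∃ τ' : α → Perm β, prodCongrRight τ' = τ := by
  have hτ' : ∀ x, (τ⁻¹ x).1 = x.1 := fun x => by simpa using (hτ (τ⁻¹ x)).symm
  refine ⟨fun a => ⟨fun b => (τ (a, b)).2, fun b => (τ⁻¹ (a, b)).2, fun b => ?_, fun b => ?_⟩, ?_⟩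
  · change (τ⁻¹ (a, (τ (a, b)).2)).2 = b
    rw [show (a, (τ (a, b)).2) = τ (a, b) from Prod.ext (hτ (a, b)).symm rfl]
    simp
  · change (τ (a, (τ⁻¹ (a, b)).2)).2 = b
    rw [show (a, (τ⁻¹ (a, b)).2) = τ⁻¹ (a, b) from Prod.ext (hτ' (a, b)).symm rfl]
    simp
  · ext ⟨a, b⟩ <;> simp [hτ]

theorem card_filter_apply_snd_eq [Fintype α] [Fintype β] [DecidableEq β] (π : Perm (α × β))
    (b : β) : #{x | (π x).2 = b} = Fintype.card α := by
  rw [card_equiv π (t := univ ×ˢ {b}) fun x => by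
    simp only [mem_filter, mem_univ, true_and, mem_product, mem_singleton]]
  simp

theorem exists_factorization_fixing_snd_fst_snd [Finite α] [Finite β] (π : Perm (α × β)) :
    ∃ σ τ ρ : Perm (α × β), (∀ x, (σ x).2 = x.2) ∧ (∀ x, (τ x).1 = x.1) ∧
      (∀ x, (ρ x).2 = x.2) ∧ π = σ * τ * ρ := by
  classical
  cases nonempty_fintype α
  cases nonempty_fintype β
  obtain ⟨c, hc, hcp, hcq⟩ := exists_colouring_injOn_of_card_fiber_eq Prod.snd (fun x => (π x).2)
    (Fintype.card α) univ (card_filter_apply_snd_eq 1) (card_filter_apply_snd_eq π)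
  let κ : α × β → α := fun x => (Fintype.equivFin α).symm ⟨c x, hc x (mem_univ x)⟩
  have hκ : ∀ x y, κ x = κ y → c x = c y := fun x y h =>
    congrArg Fin.val ((Fintype.equivFin α).symm.injective h)
  have hρ : Injective fun x => (κ x, x.2) := fun x y h =>
    hcp (mem_univ x) (mem_univ y) (Prod.ext (hκ x y (Prod.mk.inj h).1) (Prod.mk.inj h).2)
  have hσ : Injective fun y => (κ (π⁻¹ y), y.2) := fun x y h => π⁻¹.injective <|
    hcq (mem_univ _) (mem_univ _)
      (Prod.ext (hκ _ _ (Prod.mk.inj h).1) (by simpa using (Prod.mk.inj h).2))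
  let ρ := ofBijective _ (Finite.injective_iff_bijective.1 hρ)
  let σ := ofBijective _ (Finite.injective_iff_bijective.1 hσ)
  refine ⟨σ⁻¹, σ * π * ρ⁻¹, ρ, fun x => ?_, fun x => ?_, fun x => rfl, by group⟩
  · exact (congrArg Prod.snd (σ.apply_symm_apply x) :)
  · obtain ⟨x, rfl⟩ := ρ.surjective x
    simp [ρ, σ]

def MovesOnlyCoord {d : ℕ} {A : Fin d → Type*} (σ : Perm (∀ i, A i)) (k : ℕ) : Prop :=
  ∀ (a : ∀ i, A i) (i : Fin d), (i : ℕ) ≠ k → σ a i = a i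

section consEquiv

variable {d : ℕ} {A : Fin (d + 1) → Type*}

theorem movesOnlyCoord_zero_permCongr_consEquiv (σ : Perm (A 0 × ∀ i : Fin d, A i.succ))
    (hσ : ∀ x, (σ x).2 = x.2) : MovesOnlyCoord ((Fin.consEquiv A).permCongrHom σ) 0 := by
  intro a i hi
  obtain ⟨i, rfl⟩ := Fin.exists_succ_eq.2 (Fin.val_ne_iff.1 hi : i ≠ 0)
  simp [hσ, Fin.tail]

theorem movesOnlyCoord_succ_permCongr_consEquiv (τ : A 0 → Perm (∀ i : Fin d, A i.succ))
    {k : ℕ} (hτ : ∀ a, MovesOnlyCoord (τ a) k) :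
    MovesOnlyCoord ((Fin.consEquiv A).permCongrHom (prodCongrRight τ)) (k + 1) := by
  intro a i hi
  cases i using Fin.cases with
  | zero => simp
  | succ i => simpa [Fin.tail] using hτ (a 0) (Fin.tail a) i (by simpa using hi)

end consEquiv

theorem exists_palindromic_factorization : ∀ (d : ℕ) (A : Fin (d + 1) → Type*)
    [∀ i, Finite (A i)] (π : Perm (∀ i, A i)),
    ∃ f : Fin (2 * d + 1) → Perm (∀ i, A i),
      (∀ j : Fin (2 * d + 1), MovesOnlyCoord (f j) (min j (2 * d - j))) ∧ π = (List.ofFn f).prod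
  | 0, A, _, π => ⟨fun _ => π, fun j a i hi => by have := i.isLt; omega, by simp⟩
  | d + 1, A, _, π => by
    let E := Fin.consEquiv A
    obtain ⟨σ, τ, ρ, hσ, hτ, hρ, hπ⟩ := exists_factorization_fixing_snd_fst_snd (E.symm.permCongr π)
    obtain ⟨τ, rfl⟩ := exists_prodCongrRight_eq τ hτ
    choose f hf hτf using fun a => exists_palindromic_factorization d (fun i => A i.succ) (τ a)
    let middle j := E.permCongrHom (prodCongrRight fun a => f a j)
    rw [show 2 * (d + 1) = 2 * d + 1 + 1 by ring]
    refine ⟨Fin.cons (E.permCongrHom σ) (Fin.snoc middle (E.permCongrHom ρ)), fun j => ?_, ?_⟩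
    · cases j using Fin.cases with
      | zero => exact movesOnlyCoord_zero_permCongr_consEquiv σ hσ
      | succ j =>
        cases j using Fin.lastCases with
        | last =>
          rw [Fin.cons_succ, Fin.snoc_last]
          convert movesOnlyCoord_zero_permCongr_consEquiv ρ hρ using 1
          simp
        | cast j =>
          rw [Fin.cons_succ, Fin.snoc_castSucc]
          convert movesOnlyCoord_succ_permCongr_consEquiv _ fun a => hf a j using 1
          simp only [Fin.val_succ, Fin.val_castSucc]
          omega
    · have hmiddle : (List.ofFn middle).prod = E.permCongrHom (prodCongrRight τ) := by
        rw [funext hτf, prodCongrRight_ofFn_prod, map_list_prod, List.map_ofFn]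
        rfl
      rw [List.prod_ofFn_cons_snoc, hmiddle, ← map_mul, ← map_mul, ← hπ]
      ext
      simp

end Equiv.Perm

theorem sym_pi_decomposition_general (d : ℕ) (A : Fin d → Type*)
    [∀ i, Finite (A i)] (π : Equiv.Perm (∀ i, A i)) :
    ∃ f : Fin (2 * d - 1) → Equiv.Perm (∀ i, A i),
      (∀ j : Fin (2 * d - 1), ∀ a : ∀ i, A i, ∀ i : Fin d,
        (i : ℕ) ≠ min (j : ℕ) (2 * d - 2 - (j : ℕ)) → f j a i = a i) ∧
      π = (List.ofFn f).prod := by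
  cases d with
  | zero => exact ⟨finZeroElim, fun _ _ i => i.elim0, Subsingleton.elim _ _⟩
  | succ d =>
    rw [show 2 * (d + 1) - 1 = 2 * d + 1 by omega, show 2 * (d + 1) - 2 = 2 * d by omega]
    exact Equiv.Perm.exists_palindromic_factorization d A π

/-- For `d ≥ 2` and finite sets `A₁,…,A_d`, every permutation of
`A₁ × ⋯ × A_d` is a product of `2d − 1` permutations `g₁ g₂ ⋯ g_{d-1} g_d g_{d-1} ⋯ g₁`,
where the `j`-th factor changes only the coordinate `min j (2d-2-j)` (0-indexed), i.e. one
factor from each of `G₁,…,G_{d-1},G_d,G_{d-1},…,G₁` in that order. -/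
theorem sym_pi_decomposition (d : ℕ) (hd : 2 ≤ d) (A : Fin d → Type*)
    [∀ i, Finite (A i)] (π : Equiv.Perm (∀ i, A i)) :
    ∃ f : Fin (2 * d - 1) → Equiv.Perm (∀ i, A i),
      (∀ j : Fin (2 * d - 1), ∀ a : ∀ i, A i, ∀ i : Fin d,
        (i : ℕ) ≠ min (j : ℕ) (2 * d - 2 - (j : ℕ)) → f j a i = a i) ∧
      π = (List.ofFn f).prod :=
  sym_pi_decomposition_general d A π
end

section
/- Let G be a simple graph and let uv be an edge of G. Let G' be obtained from G by replacing the edge uv with a path of length 3 (adding two new vertices w, w', deleting uv, and adding edges uw, ww', w'v). Then the maximum size of an independent set in G' equals the maximum size of an independent set in G plus 1. -/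
/-- The independence number of a graph, as the supremum of sizes of independent sets. -/
noncomputable def myIndepNum {V : Type*} (G : SimpleGraph V) : ℕ :=
  sSup {n : ℕ | ∃ s : Finset V, s.card = n ∧
    ∀ a ∈ s, ∀ b ∈ s, a ≠ b → ¬ G.Adj a b}

/-! An independent set of `G'` contains at most one of the adjacent vertices `w = inr 0`,
`w' = inr 1`, and its trace on `V` is independent in `G - uv`. If it avoids both, dropping `v` from
the trace leaves an independent set of `G`; if it contains `w` (resp. `w'`) the trace misses `u`
(resp. `v`) and is already independent in `G`. Conversely a maximum independent set of `G` misses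
`u` or `v`, and then `w` or `w'` respectively can be added to it. -/

open Finset Sum

theorem myIndepNum_eq_indepNum {V : Type*} (G : SimpleGraph V) : myIndepNum G = G.indepNum := by
  unfold myIndepNum SimpleGraph.indepNum
  congr! 2 with n
  simp only [SimpleGraph.isNIndepSet_iff, Set.Pairwise, mem_coe, and_comm]

namespace SimpleGraph

variable {V W : Type*}

theorem IsIndepSet.of_deleteEdges {G : SimpleGraph V} {s : Set V} {u v : V}
    (hs : (G.deleteEdges {s(u, v)}).IsIndepSet s) (huv : u ∉ s ∨ v ∉ s) : G.IsIndepSet s := by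
  intro a ha b hb hab hadj
  refine hs ha hb hab ((deleteEdges_adj ..).mpr ⟨hadj, fun h => ?_⟩)
  rcases Sym2.eq_iff.mp (Set.mem_singleton_iff.mp h) with ⟨rfl, rfl⟩ | ⟨rfl, rfl⟩ <;> tauto

theorem IsIndepSet.toLeft {H : SimpleGraph (V ⊕ W)} {t : Finset (V ⊕ W)}
    (ht : H.IsIndepSet t) : (H.comap inl).IsIndepSet t.toLeft := fun _ ha _ hb hab =>
  ht (mem_toLeft.mp ha) (mem_toLeft.mp hb) (inl_injective.ne hab)

theorem IsIndepSet.toRight {H : SimpleGraph (V ⊕ W)} {t : Finset (V ⊕ W)}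
    (ht : H.IsIndepSet t) : (H.comap inr).IsIndepSet t.toRight := fun _ ha _ hb hab =>
  ht (mem_toRight.mp ha) (mem_toRight.mp hb) (inr_injective.ne hab)

theorem IsIndepSet.insert_inr_map_inl [DecidableEq V] [DecidableEq W]
    {H : SimpleGraph (V ⊕ W)} {s : Finset V} (hs : (H.comap inl).IsIndepSet s) {w : W} (hw : ∀ a ∈ s, ¬ H.Adj (inl a) (inr w)) :
    H.IsIndepSet ((insert (inr w) (s.map .inl) : Finset (V ⊕ W)) : Set (V ⊕ W)) := by
  rw [coe_insert, coe_map, isIndepSet_iff, Set.pairwise_insert]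
  refine ⟨inl_injective.injOn.pairwise_image.mpr hs, ?_⟩
  rintro _ ⟨a, ha, rfl⟩ -
  exact ⟨fun h => hw a ha h.symm, hw a ha⟩

theorem card_le_one_of_isIndepSet_of_adj {H : SimpleGraph (Fin 2)} (h : H.Adj 0 1)
    {s : Finset (Fin 2)} (hs : H.IsIndepSet s) : #s ≤ 1 := by
  refine card_le_one.mpr fun i hi j hj => ?_
  by_contra hij
  fin_cases i <;> fin_cases j
  all_goals first
    | exact hij rfl
    | exact hs hi hj hij h
    | exact hs hi hj hij h.symm

variable [Fintype V] {G : SimpleGraph V} {H : SimpleGraph (V ⊕ Fin 2)} {u v : V}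

theorem card_le_indepNum_add_one (hleft : G.deleteEdges {s(u, v)} ≤ H.comap inl)
    (hu : H.Adj (inl u) (inr 0)) (hmid : H.Adj (inr 0) (inr 1)) (hv : H.Adj (inr 1) (inl v))
    {t : Finset (V ⊕ Fin 2)} (ht : H.IsIndepSet t) : #t ≤ G.indepNum + 1 := by
  classical
  have hL : (G.deleteEdges {s(u, v)}).IsIndepSet t.toLeft :=
    (IsIndepSet.toLeft ht).mono' fun _ _ h h' => h (hleft h')
  rw [← card_toLeft_add_card_toRight]
  rcases t.toRight.eq_empty_or_nonempty with hR | ⟨i, hi⟩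
  · have hG : G.IsIndepSet ↑(t.toLeft.erase v) :=
      IsIndepSet.of_deleteEdges (hL.mono (coe_subset.mpr (erase_subset v _)))
        (Or.inr (notMem_erase v _))
    have hcard := hG.card_le_indepNum
    have herase := pred_card_le_card_erase (s := t.toLeft) (a := v)
    rw [hR, card_empty]
    omega
  · have hR := card_le_one_of_isIndepSet_of_adj (H := H.comap inr) hmid (IsIndepSet.toRight ht)
    have hG : G.IsIndepSet t.toLeft := by
      refine IsIndepSet.of_deleteEdges hL ?_
      rw [mem_toRight] at hi
      fin_cases i
      · exact Or.inl fun hu' => ht (mem_toLeft.mp hu') hi (by simp) hu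
      · exact Or.inr fun hv' => ht hi (mem_toLeft.mp hv') (by simp) hv
    have hcard := hG.card_le_indepNum
    omega

theorem indepNum_le_indepNum_add_one (hleft : G.deleteEdges {s(u, v)} ≤ H.comap inl)
    (hu : H.Adj (inl u) (inr 0)) (hmid : H.Adj (inr 0) (inr 1)) (hv : H.Adj (inr 1) (inl v)) :
    H.indepNum ≤ G.indepNum + 1 :=
  have ⟨_, ht, hcard⟩ := H.exists_isNIndepSet_indepNum
  hcard ▸ card_le_indepNum_add_one hleft hu hmid hv ht

theorem indepNum_add_one_le (huv : G.Adj u v) (hleft : H.comap inl ≤ G)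
    (hu : ∀ a, H.Adj (inl a) (inr 0) → a = u) (hv : ∀ a, H.Adj (inl a) (inr 1) → a = v) :
    G.indepNum + 1 ≤ H.indepNum := by
  classical
  obtain ⟨s, hs, hcard⟩ := G.exists_isNIndepSet_indepNum
  obtain ⟨w, hw⟩ : ∃ w, ∀ a ∈ s, ¬ H.Adj (inl a) (inr w) := by
    by_cases hus : u ∈ s
    · have hvs : v ∉ s := fun hvs => hs hus hvs huv.ne huv
      exact ⟨1, fun a ha h => hvs (hv a h ▸ ha)⟩
    · exact ⟨0, fun a ha h => hus (hu a h ▸ ha)⟩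
  have hs' : (H.comap inl).IsIndepSet s := hs.mono' fun _ _ h h' => h (hleft h')
  calc G.indepNum + 1 = #(insert (inr w) (s.map .inl)) := by
        rw [card_insert_of_notMem (by simp), card_map, hcard]
    _ ≤ H.indepNum := (IsIndepSet.insert_inr_map_inl hs' hw).card_le_indepNum

end SimpleGraph

open SimpleGraph

/-- Doubly subdividing an edge `uv` of a finite simple graph `G`
(replacing `uv` by the path `u–w–w'–v` with two fresh vertices `w := inr 0`, `w' := inr 1`)
increases the independence number by exactly one. -/
theorem double_subdivision_indepNum {V : Type*} [Fintype V]
    (G : SimpleGraph V) (u v : V) (huv : G.Adj u v)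
    (G' : SimpleGraph (V ⊕ Fin 2))
    (hG' : ∀ x y : V ⊕ Fin 2, G'.Adj x y ↔
      ((∃ a b : V, x = Sum.inl a ∧ y = Sum.inl b ∧ G.Adj a b ∧
          ¬((a = u ∧ b = v) ∨ (a = v ∧ b = u))) ∨
       (x = Sum.inl u ∧ y = Sum.inr 0) ∨ (x = Sum.inr 0 ∧ y = Sum.inl u) ∨
       (x = Sum.inr 0 ∧ y = Sum.inr 1) ∨ (x = Sum.inr 1 ∧ y = Sum.inr 0) ∨
       (x = Sum.inr 1 ∧ y = Sum.inl v) ∨ (x = Sum.inl v ∧ y = Sum.inr 1))) :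
    myIndepNum G' = myIndepNum G + 1 := by
  have hleft : G'.comap inl = G.deleteEdges {s(u, v)} := by
    ext a b
    simp [hG']
  have hu : ∀ a, G'.Adj (inl a) (inr 0) ↔ a = u := by simp [hG']
  have hv : ∀ a, G'.Adj (inl a) (inr 1) ↔ a = v := by simp [hG']
  have hmid : G'.Adj (inr 0) (inr 1) := by simp [hG']
  rw [myIndepNum_eq_indepNum, myIndepNum_eq_indepNum]
  exact le_antisymm
    (indepNum_le_indepNum_add_one hleft.ge ((hu u).mpr rfl) hmid ((hv v).mpr rfl).symm)
    (indepNum_add_one_le huv (hleft.le.trans (deleteEdges_le _)) (fun a => (hu a).mp)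
      (fun a => (hv a).mp))
end

section
/- Fix d ≥ 1 and α ≥ 1, and let F be a finite family of n measurable objects in ℝ^d, each contained in a ball B of radius δ, such that every object o ∈ F has volume at least Vol(B)/(4α)^d. Then there exists a set of at most ⌊(4α)^d (ln n + 1)⌋ points in B stabbing every object of F (i.e., every o ∈ F contains at least one of the points). -/
/-!
This is the greedy (derandomized) form of the sampling argument. If every object fills at least
a `1/M` fraction of `B`, then by the first moment method some point of `B` lies in at least a
`1/M` fraction of the objects. Take that point and recurse on the objects it misses: their number
drops from `n` to at most `(1 - 1/M) n`, and since `log (1 - 1/M) ≤ -1/M` this lowers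
`M (log n + 1)` by at least one, which pays for the chosen point.
-/

open MeasureTheory Finset Real
open scoped ENNReal

theorem mul_log_add_one_le_mul_log {M x y : ℝ} (hM : 0 ≤ M) (hx : 0 < x) (hy : 0 < y)
    (h : M * x ≤ (M - 1) * y) : M * log x + 1 ≤ M * log y := by
  have hratio : M * (x / y) ≤ M - 1 := by
    rw [mul_div_assoc', div_le_iff₀ hy]; linarith
  have hlog : log x - log y ≤ x / y - 1 := by
    rw [← log_div hx.ne' hy.ne']; exact log_le_sub_one_of_pos (div_pos hx hy)
  nlinarith [mul_le_mul_of_nonneg_left hlog hM]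

theorem floor_mul_log_add_one_add_one_le {M : ℝ} (hM : 0 < M) {m n : ℕ} (hm : 0 < m)
    (h : M * m ≤ (M - 1) * n) : ⌊M * (log m + 1)⌋₊ + 1 ≤ ⌊M * (log n + 1)⌋₊ := by
  have hm' : (0 : ℝ) < m := by exact_mod_cast hm
  have hn : (0 : ℝ) < n := by
    by_contra! hn
    nlinarith [(Nat.cast_nonneg n : (0 : ℝ) ≤ n)]
  have := mul_log_add_one_le_mul_log hM.le hm' hn h
  have := log_natCast_nonneg m
  rw [← Nat.floor_add_one (by positivity)]
  exact Nat.floor_mono (by linarith)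

theorem mul_card_filter_not_le {ι : Type*} {s : Finset ι} {p : ι → Prop} [DecidablePred p]
    {M : ℝ} (h : (#s : ℝ) ≤ M * #{i ∈ s | p i}) : M * #{i ∈ s | ¬p i} ≤ (M - 1) * #s := by
  have hsplit : ((#{i ∈ s | p i} + #{i ∈ s | ¬p i} : ℕ) : ℝ) = #s :=
    congrArg _ (card_filter_add_card_filter_not p)
  push_cast at hsplit
  linear_combination h + M * hsplit

section Stabbing

open scoped Classical

variable {α : Type*} [MeasurableSpace α] {μ : Measure α} {B : Set α} {F : Finset (Set α)}

theorem lintegral_card_filter_mem (hmeas : ∀ o ∈ F, MeasurableSet o) :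
    ∫⁻ x, (#{o ∈ F | x ∈ o} : ℝ≥0∞) ∂μ = ∑ o ∈ F, μ o := by
  have hcount : ∀ x, (#{o ∈ F | x ∈ o} : ℝ≥0∞) = ∑ o ∈ F, o.indicator 1 x := fun x => by
    simp only [Set.indicator_apply, Pi.one_apply, sum_boole]
  simp_rw [hcount]
  rw [lintegral_finsetSum _ fun o ho => measurable_one.indicator (hmeas o ho)]
  exact sum_congr rfl fun o ho => lintegral_indicator_one (hmeas o ho)

theorem exists_mem_sum_measure_le_card_filter_mem_mul (hB : MeasurableSet B) (h0 : μ B ≠ 0)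
    (htop : μ B ≠ ∞) (hmeas : ∀ o ∈ F, MeasurableSet o) (hsub : ∀ o ∈ F, o ⊆ B) :
    ∃ p ∈ B, ∑ o ∈ F, μ o ≤ #{o ∈ F | p ∈ o} * μ B := by
  have hint : ∫⁻ x in B, (#{o ∈ F | x ∈ o} : ℝ≥0∞) ∂μ = ∑ o ∈ F, μ o := by
    rw [lintegral_card_filter_mem hmeas]
    exact sum_congr rfl fun o ho => by
      rw [Measure.restrict_apply (hmeas o ho), Set.inter_eq_left.mpr (hsub o ho)]
  have hfin : ∑ o ∈ F, μ o ≠ ∞ :=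
    ENNReal.sum_ne_top.mpr fun o ho => ne_top_of_le_ne_top htop (measure_mono (hsub o ho))
  obtain ⟨p, hpB, hp⟩ := exists_setLAverage_le h0 hB.nullMeasurableSet (hint ▸ hfin)
  rw [setLAverage_eq, hint, ENNReal.div_le_iff h0 htop] at hp
  exact ⟨p, hpB, hp⟩

theorem exists_mem_card_le_mul_card_filter_mem (hB : MeasurableSet B) (h0 : μ B ≠ 0)
    (htop : μ B ≠ ∞) {M : ℝ} (hM : 0 ≤ M) (hmeas : ∀ o ∈ F, MeasurableSet o)
    (hsub : ∀ o ∈ F, o ⊆ B) (hvol : ∀ o ∈ F, μ B ≤ ENNReal.ofReal M * μ o) :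
    ∃ p ∈ B, (#F : ℝ) ≤ M * #{o ∈ F | p ∈ o} := by
  obtain ⟨p, hpB, hp⟩ := exists_mem_sum_measure_le_card_filter_mem_mul hB h0 htop hmeas hsub
  refine ⟨p, hpB, ?_⟩
  have hmul : (#F : ℝ≥0∞) * μ B ≤ ENNReal.ofReal M * #{o ∈ F | p ∈ o} * μ B :=
    calc (#F : ℝ≥0∞) * μ B = ∑ _o ∈ F, μ B := by rw [sum_const, nsmul_eq_mul]
      _ ≤ ∑ o ∈ F, ENNReal.ofReal M * μ o := sum_le_sum hvol
      _ = ENNReal.ofReal M * ∑ o ∈ F, μ o := by rw [mul_sum]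
      _ ≤ ENNReal.ofReal M * #{o ∈ F | p ∈ o} * μ B := by
        rw [mul_assoc]; exact mul_le_mul_right hp _
  rwa [ENNReal.mul_le_mul_iff_left h0 htop, ← ENNReal.ofReal_natCast, ← ENNReal.ofReal_natCast,
    ← ENNReal.ofReal_mul hM, ENNReal.ofReal_le_ofReal_iff (by positivity)] at hmul

theorem exists_stabbing_finset_subset_card_le (hB : MeasurableSet B) (h0 : μ B ≠ 0)
    (htop : μ B ≠ ∞) {M : ℝ} (hM : 1 ≤ M) (hmeas : ∀ o ∈ F, MeasurableSet o) (hsub : ∀ o ∈ F, o ⊆ B)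
    (hvol : ∀ o ∈ F, μ B ≤ ENNReal.ofReal M * μ o) :
    ∃ P : Finset α, (P : Set α) ⊆ B ∧ #P ≤ ⌊M * (log #F + 1)⌋₊ ∧ ∀ o ∈ F, ∃ p ∈ P, p ∈ o := by
  induction F using Finset.strongInduction with
  | H F ih =>
  rcases F.eq_empty_or_nonempty with rfl | hF
  · exact ⟨∅, by simp, by simp, by simp⟩
  obtain ⟨p, hpB, hp⟩ :=
    exists_mem_card_le_mul_card_filter_mem hB h0 htop (by linarith) hmeas hsub hvol
  set F' := F.filter (p ∉ ·)
  obtain ⟨P', hP'B, hP'card, hP'F'⟩ : ∃ P' : Finset α, (P' : Set α) ⊆ B ∧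
      #P' + 1 ≤ ⌊M * (log #F + 1)⌋₊ ∧ ∀ o ∈ F', ∃ q ∈ P', q ∈ o := by
    rcases F'.eq_empty_or_nonempty with hF'e | hF'ne
    · refine ⟨∅, by simp, ?_, by simp [hF'e]⟩
      have := log_natCast_nonneg #F
      rw [card_empty, zero_add]
      exact Nat.le_floor (by push_cast; nlinarith)
    have hF'card := mul_card_filter_not_le hp
    have hF'F : F' ⊂ F := by
      refine filter_ssubset.mpr ?_
      by_contra! hmiss
      rw [filter_false_of_mem hmiss, card_empty] at hp
      simp [hF.ne_empty] at hp
    obtain ⟨P', hP'B, hP'card, hP'F'⟩ := ih F' hF'F (fun o ho => hmeas o (mem_filter.mp ho).1)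
      (fun o ho => hsub o (mem_filter.mp ho).1) (fun o ho => hvol o (mem_filter.mp ho).1)
    have := floor_mul_log_add_one_add_one_le (by linarith) hF'ne.card_pos hF'card
    exact ⟨P', hP'B, by omega, hP'F'⟩
  refine ⟨insert p P', ?_, (card_insert_le _ _).trans hP'card, fun o ho => ?_⟩
  · simpa [Set.insert_subset_iff] using ⟨hpB, hP'B⟩
  · by_cases hpo : p ∈ o
    · exact ⟨p, mem_insert_self _ _, hpo⟩
    · obtain ⟨q, hq, hqo⟩ := hP'F' o (mem_filter.mpr ⟨ho, hpo⟩)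
      exact ⟨q, mem_insert_of_mem hq, hqo⟩

end Stabbing

theorem stabbing_of_large_volume_general (d : ℕ) (α : ℝ) (hα : 1 ≤ α)
    (c : EuclideanSpace ℝ (Fin d)) (δ : ℝ) (hδ : 0 < δ)
    (F : Finset (Set (EuclideanSpace ℝ (Fin d))))
    (hmeas : ∀ o ∈ F, MeasurableSet o)
    (hsub : ∀ o ∈ F, o ⊆ Metric.closedBall c δ)
    (hvol : ∀ o ∈ F,
      volume (Metric.closedBall c δ) ≤ ENNReal.ofReal ((4 * α) ^ d) * volume o) :
    ∃ P : Finset (EuclideanSpace ℝ (Fin d)),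
      (↑P : Set (EuclideanSpace ℝ (Fin d))) ⊆ Metric.closedBall c δ ∧
      P.card ≤ Nat.floor ((4 * α) ^ d * (Real.log F.card + 1)) ∧
      ∀ o ∈ F, ∃ p ∈ P, p ∈ o :=
  exists_stabbing_finset_subset_card_le measurableSet_closedBall
    (Metric.measure_closedBall_pos volume c hδ).ne' measure_closedBall_lt_top.ne
    (one_le_pow₀ (by linarith)) hmeas hsub hvol

/-- Let `F` be a finite family of `n` measurable objects in `ℝ^d`, each
contained in a ball `B` of radius `δ`, each of volume at least `Vol(B)/(4α)^d` (with
`α ≥ 1`). Then at most `⌊(4α)^d (ln n + 1)⌋` points of `B` suffice to stab every object. -/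
theorem stabbing_of_large_volume (d : ℕ) (hd : 1 ≤ d) (α : ℝ) (hα : 1 ≤ α)
    (c : EuclideanSpace ℝ (Fin d)) (δ : ℝ) (hδ : 0 < δ)
    (F : Finset (Set (EuclideanSpace ℝ (Fin d))))
    (hmeas : ∀ o ∈ F, MeasurableSet o)
    (hsub : ∀ o ∈ F, o ⊆ Metric.closedBall c δ)
    (hvol : ∀ o ∈ F,
      volume (Metric.closedBall c δ) ≤ ENNReal.ofReal ((4 * α) ^ d) * volume o) :
    ∃ P : Finset (EuclideanSpace ℝ (Fin d)),
      (↑P : Set (EuclideanSpace ℝ (Fin d))) ⊆ Metric.closedBall c δ ∧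
      P.card ≤ Nat.floor ((4 * α) ^ d * (Real.log F.card + 1)) ∧
      ∀ o ∈ F, ∃ p ∈ P, p ∈ o :=
  stabbing_of_large_volume_general d α hα c δ hδ F hmeas hsub hvol
end

section
/- Fix an integer L ≥ 2 and consider the family of closed axis-parallel boxes in ℝ³ with side-length multiset {1,1,L} (the long side along any of the three axes). The union over the three axis orientations of the lattices generated by the vertex sets of an axis-aligned 1×1×L box stabs every such box; consequently, any sub-family of such boxes contained in a ball of radius 2L can be stabbed by O(L²) points, so the family has stabbing number O(L^{2/3}). -/
/-- An axis-parallel box in `ℝ³` with side-length multiset `{1,1,L}`,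
the long side along axis `j`. -/
def IsCanonicalBox3 (L : ℝ) (b : Set (EuclideanSpace ℝ (Fin 3))) : Prop :=
  ∃ (a : Fin 3 → ℝ) (j : Fin 3),
    b = {x | ∀ i : Fin 3, a i ≤ x i ∧ x i ≤ a i + (if i = j then L else 1)}

/-- The union over the three orientations `j` of the lattices `Λ_j` generated by the
vertices of an axis-aligned `1×1×L` box with long side along axis `j`
(e.g. `Λ₃ = ℤ × ℤ × Lℤ`). -/
def BoxLattice (L : ℝ) : Set (EuclideanSpace ℝ (Fin 3)) :=
  {x | ∃ (p : Fin 3 → ℤ) (j : Fin 3),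
    ∀ i : Fin 3, x i = if i = j then L * (p i : ℝ) else (p i : ℝ)}

/-!
A box `∏ i, [a i, a i + s i]` contains the point `(s i * ⌈a i / s i⌉)ᵢ` of the lattice
`∏ i, s i ℤ`, so each `1 × 1 × L` box is stabbed by the lattice of its own orientation. To stab
every such box inside a ball of radius `r` it therefore suffices to keep, for each of the three
orientations, the lattice points in the ball; their integer coordinates range over a box with at
most `∏ i, (2 r / s i + 1)` points, which for `r = 2 L` is `5 (4 L + 1)² ≤ 125 L²`.
-/

open Finset

lemma mul_ceil_div_mem_Icc {s : ℝ} (hs : 0 < s) (a : ℝ) :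
    a ≤ s * ⌈a / s⌉ ∧ s * ⌈a / s⌉ ≤ a + s := by
  have h_eq : s * (a / s) = a := mul_div_cancel₀ a hs.ne'
  constructor
  · calc a = s * (a / s) := h_eq.symm
      _ ≤ s * ⌈a / s⌉ := mul_le_mul_of_nonneg_left (Int.le_ceil _) hs.le
  · calc s * ⌈a / s⌉ ≤ s * (a / s + 1) :=
          mul_le_mul_of_nonneg_left (Int.ceil_lt_add_one _).le hs.le
      _ = a + s := by rw [mul_add, h_eq, mul_one]

lemma card_Icc_ceil_floor_le {x y : ℝ} (h : x ≤ y) :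
    ((Icc ⌈x⌉ ⌊y⌋).card : ℝ) ≤ y - x + 1 := by
  have h_nonneg : 0 ≤ ⌊y⌋ + 1 - ⌈x⌉ := by
    have h_lt : (⌈x⌉ : ℝ) < ⌊y⌋ + 2 := by
      linarith [Int.ceil_lt_add_one x, Int.lt_floor_add_one y]
    have h_lt' : ⌈x⌉ < ⌊y⌋ + 2 := by exact_mod_cast h_lt
    omega
  rw [Int.card_Icc, ← Int.cast_natCast, Int.toNat_of_nonneg h_nonneg]
  push_cast
  linarith [Int.floor_le y, Int.le_ceil x]

section ScaledLattice

variable {ι : Type*}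

def scaledLattice (s : ι → ℝ) : Set (EuclideanSpace ℝ ι) :=
  {x | ∃ p : ι → ℤ, ∀ i, x i = s i * p i}

lemma exists_mem_scaledLattice_of_box {s : ι → ℝ} (hs : ∀ i, 0 < s i) (a : ι → ℝ) :
    ∃ x ∈ scaledLattice s, ∀ i, a i ≤ x i ∧ x i ≤ a i + s i :=
  ⟨WithLp.toLp 2 fun i => s i * ⌈a i / s i⌉, ⟨fun i => ⌈a i / s i⌉, fun _ => rfl⟩,
    fun i => mul_ceil_div_mem_Icc (hs i) (a i)⟩

variable [Fintype ι] [DecidableEq ι]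

open scoped Classical in
/-- The points of `scaledLattice s` whose integer coordinates lie in the bounding box of
`closedBall z r`. -/
noncomputable def scaledLatticeBallFinset (s : ι → ℝ) (z : EuclideanSpace ℝ ι) (r : ℝ) :
    Finset (EuclideanSpace ℝ ι) :=
  (Fintype.piFinset fun i => Icc ⌈(z i - r) / s i⌉ ⌊(z i + r) / s i⌋).image
    fun p => WithLp.toLp 2 fun i => s i * p i

lemma coe_scaledLatticeBallFinset_subset (s : ι → ℝ) (z : EuclideanSpace ℝ ι) (r : ℝ) :
    ↑(scaledLatticeBallFinset s z r) ⊆ scaledLattice s := by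
  intro x hx
  obtain ⟨p, -, rfl⟩ := mem_image.1 hx
  exact ⟨p, fun _ => rfl⟩

lemma mem_scaledLatticeBallFinset {s : ι → ℝ} (hs : ∀ i, 0 < s i) {z x : EuclideanSpace ℝ ι}
    {r : ℝ} (hx : x ∈ scaledLattice s) (hxz : x ∈ Metric.closedBall z r) :
    x ∈ scaledLatticeBallFinset s z r := by
  obtain ⟨p, hp⟩ := hx
  refine mem_image.2 ⟨p, Fintype.mem_piFinset.2 fun i => mem_Icc.2 ?_, ?_⟩
  · have h_coord : |x i - z i| ≤ r :=
      (PiLp.dist_apply_le x z i).trans (Metric.mem_closedBall.1 hxz)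
    rw [hp, abs_le] at h_coord
    constructor
    · exact Int.ceil_le.2 <| (div_le_iff₀ (hs i)).2 <| by linarith [mul_comm (s i) (p i : ℝ)]
    · exact Int.le_floor.2 <| (le_div_iff₀ (hs i)).2 <| by linarith [mul_comm (s i) (p i : ℝ)]
  · ext i
    exact (hp i).symm

lemma card_scaledLatticeBallFinset_le {s : ι → ℝ} (hs : ∀ i, 0 < s i)
    (z : EuclideanSpace ℝ ι) {r : ℝ} (hr : 0 ≤ r) :
    ((scaledLatticeBallFinset s z r).card : ℝ) ≤ ∏ i, (2 * r / s i + 1) := by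
  calc ((scaledLatticeBallFinset s z r).card : ℝ)
      ≤ ∏ i, ((Icc ⌈(z i - r) / s i⌉ ⌊(z i + r) / s i⌋).card : ℝ) := by
        rw [← Nat.cast_prod, ← Fintype.card_piFinset]
        exact_mod_cast card_image_le
    _ ≤ ∏ i, (2 * r / s i + 1) := by
        refine prod_le_prod (fun _ _ => Nat.cast_nonneg _) fun i _ => ?_
        have h_width : (z i + r) / s i - (z i - r) / s i = 2 * r / s i := by ring
        rw [← h_width]
        exact card_Icc_ceil_floor_le <| div_le_div_of_nonneg_right (by linarith) (hs i).le

end ScaledLattice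

def boxSide (L : ℝ) (j i : Fin 3) : ℝ := if i = j then L else 1

lemma boxSide_pos {L : ℝ} (hL : 0 < L) (j i : Fin 3) : 0 < boxSide L j i := by
  unfold boxSide
  split_ifs <;> positivity

lemma boxLattice_eq_iUnion (L : ℝ) : BoxLattice L = ⋃ j, scaledLattice (boxSide L j) := by
  ext x
  simp only [BoxLattice, scaledLattice, boxSide, Set.mem_ofPred_eq, Set.mem_iUnion, ite_mul,
    one_mul]
  exact exists_comm

lemma prod_two_mul_div_boxSide_add_one (L r : ℝ) (j : Fin 3) :
    ∏ i, (2 * r / boxSide L j i + 1) = (2 * r / L + 1) * (2 * r + 1) ^ 2 := by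
  fin_cases j <;> simp [Fin.prod_univ_three, boxSide] <;> ring

lemma IsCanonicalBox3.exists_mem_scaledLattice {L : ℝ} (hL : 0 < L)
    {b : Set (EuclideanSpace ℝ (Fin 3))} (hb : IsCanonicalBox3 L b) :
    ∃ j, ∃ p ∈ scaledLattice (boxSide L j), p ∈ b := by
  obtain ⟨a, j, rfl⟩ := hb
  obtain ⟨p, hp, hpb⟩ := exists_mem_scaledLattice_of_box (boxSide_pos hL j) a
  exact ⟨j, p, hp, hpb⟩

open scoped Classical in
noncomputable def boxLatticeBallFinset (L : ℝ) (z : EuclideanSpace ℝ (Fin 3)) (r : ℝ) :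
    Finset (EuclideanSpace ℝ (Fin 3)) :=
  univ.biUnion fun j => scaledLatticeBallFinset (boxSide L j) z r

lemma coe_boxLatticeBallFinset_subset (L : ℝ) (z : EuclideanSpace ℝ (Fin 3)) (r : ℝ) :
    ↑(boxLatticeBallFinset L z r) ⊆ BoxLattice L := by
  rw [boxLatticeBallFinset, coe_biUnion, boxLattice_eq_iUnion]
  exact Set.iUnion₂_subset fun j _ =>
    (coe_scaledLatticeBallFinset_subset _ z r).trans (Set.subset_iUnion_of_subset j le_rfl)

lemma IsCanonicalBox3.exists_mem_boxLatticeBallFinset {L : ℝ} (hL : 0 < L)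
    {b : Set (EuclideanSpace ℝ (Fin 3))} (hb : IsCanonicalBox3 L b) {z : EuclideanSpace ℝ (Fin 3)}
    {r : ℝ} (h_ball : b ⊆ Metric.closedBall z r) : ∃ p ∈ boxLatticeBallFinset L z r, p ∈ b := by
  obtain ⟨j, p, hp, hpb⟩ := hb.exists_mem_scaledLattice hL
  exact ⟨p, mem_biUnion.2 ⟨j, mem_univ _,
    mem_scaledLatticeBallFinset (boxSide_pos hL j) hp (h_ball hpb)⟩, hpb⟩

lemma card_boxLatticeBallFinset_le {L : ℝ} (hL : 1 ≤ L) (z : EuclideanSpace ℝ (Fin 3)) :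
    ((boxLatticeBallFinset L z (2 * L)).card : ℝ) ≤ 375 * L ^ 2 := by
  have h_count : 2 * (2 * L) / L + 1 = 5 := by field_simp; norm_num
  calc ((boxLatticeBallFinset L z (2 * L)).card : ℝ)
      ≤ ∑ j, ((scaledLatticeBallFinset (boxSide L j) z (2 * L)).card : ℝ) := by
        exact_mod_cast card_biUnion_le
    _ ≤ ∑ j, ∏ i, (2 * (2 * L) / boxSide L j i + 1) := sum_le_sum fun j _ =>
        card_scaledLatticeBallFinset_le (boxSide_pos (by linarith) j) z (by linarith)
    _ ≤ 375 * L ^ 2 := by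
        simp only [prod_two_mul_div_boxSide_add_one, h_count, sum_const, card_univ,
          Fintype.card_fin, nsmul_eq_mul, Nat.cast_ofNat]
        nlinarith

/-- For `L ≥ 2`: every closed `1×1×L` axis-parallel box in `ℝ³` is
stabbed by the union of the three lattices `Λ₁ ∪ Λ₂ ∪ Λ₃`; consequently any sub-family of
such boxes contained in a ball of radius `2L` can be stabbed by at most `C·L²` lattice
points (i.e. `(C^{1/3} L^{2/3})³` points, so the family is `O(L^{2/3})`-stabbed), for an
absolute constant `C`. -/
theorem canonical_boxes_stabbing_number :
    ∃ C : ℝ, 0 < C ∧ ∀ L : ℕ, 2 ≤ L →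
      (∀ b : Set (EuclideanSpace ℝ (Fin 3)), IsCanonicalBox3 (L : ℝ) b →
        ∃ p ∈ BoxLattice (L : ℝ), p ∈ b) ∧
      (∀ z : EuclideanSpace ℝ (Fin 3),
        ∃ P : Finset (EuclideanSpace ℝ (Fin 3)),
          (↑P : Set (EuclideanSpace ℝ (Fin 3))) ⊆ BoxLattice (L : ℝ) ∧
          (P.card : ℝ) ≤ C * (L : ℝ) ^ 2 ∧
          ∀ b : Set (EuclideanSpace ℝ (Fin 3)), IsCanonicalBox3 (L : ℝ) b →
            b ⊆ Metric.closedBall z (2 * L) → ∃ p ∈ P, p ∈ b) := by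
  refine ⟨375, by norm_num, fun L hL => ?_⟩
  have hL1 : (1 : ℝ) ≤ L := by exact_mod_cast (by omega : 1 ≤ L)
  have hL0 : (0 : ℝ) < L := by linarith
  refine ⟨fun b hb => ?_, fun z => ⟨boxLatticeBallFinset L z (2 * L),
    coe_boxLatticeBallFinset_subset _ z _, card_boxLatticeBallFinset_le hL1 z,
    fun b hb h_ball => hb.exists_mem_boxLatticeBallFinset hL0 h_ball⟩⟩
  obtain ⟨j, p, hp, hpb⟩ := hb.exists_mem_scaledLattice hL0
  exact ⟨p, boxLattice_eq_iUnion (L : ℝ) ▸ Set.mem_iUnion_of_mem j hp, hpb⟩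
end
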